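/- arXiv:1012.4151 — 4 statements merged into one kernel-verified Lean document; each statement's English description precedes it below -/
import Mathlib

section
/- Let T be a tree with the Julg–Valette embedding f : T → Ω(T) defined via a basepoint b (as f(x) = Σ_{e ∈ geod(x)} δ_e). If a group Γ acts by graph automorphisms on T, then the formula α_g(v) = g·v + f(g·b) (where g·v denotes the linear action of g on Ω(T) induced by permuting edges) defines an affine isometric action of Γ on Ω(T), and f is Γ-equivariant: f(g·x) = α_g(f(x)) for all g ∈ Γ and x ∈ T. -/
/-- Equivariance of the Julg–Valette embedding.
A group `Γ` acts on the vertices of a tree `G` preserving adjacency; it hence acts on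
darts (oriented edges), and we assume given a linear isometric action `U` on `H = Ω(T)`
satisfying `U g (δ e) = δ (g·e)`.  Writing `f x` for the sum of `δ` over the darts of any
path from the basepoint `b` to `x` (the geodesic, since `G` is a tree), the affine maps
`α_g(v) = U g v + f(g·b)` satisfy the cocycle identity `f((gh)·b) = U g (f(h·b)) + f(g·b)`
(so `α` is an affine isometric action), and `f` is equivariant: `f(g·x) = U g (f x) + f(g·b)`. -/
theorem stmt1 {V : Type*} (G : SimpleGraph V) (hT : G.IsTree)
    {H : Type*} [NormedAddCommGroup H] [InnerProductSpace ℝ H]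
    {Γ : Type*} [Group Γ] [MulAction Γ V]
    (hadj : ∀ (g : Γ) {x y : V}, G.Adj x y → G.Adj (g • x) (g • y))
    (δ : G.Dart → H)
    (hanti : ∀ d : G.Dart, δ d.symm = -δ d)
    (U : Γ →* (H ≃ₗᵢ[ℝ] H))
    (hU : ∀ (g : Γ) (d : G.Dart),
      U g (δ d) = δ ⟨(g • d.toProd.1, g • d.toProd.2), hadj g d.adj⟩)
    (b : V) :
    (∀ (g h : Γ) (pg : G.Walk b (g • b)) (_ : pg.IsPath)
        (ph : G.Walk b (h • b)) (_ : ph.IsPath)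
        (pgh : G.Walk b ((g * h) • b)) (_ : pgh.IsPath),
      (pgh.darts.map δ).sum = U g ((ph.darts.map δ).sum) + (pg.darts.map δ).sum) ∧
    (∀ (g : Γ) (x : V) (p : G.Walk b (g • x)) (_ : p.IsPath)
        (q : G.Walk b x) (_ : q.IsPath)
        (r : G.Walk b (g • b)) (_ : r.IsPath),
      (p.darts.map δ).sum = U g ((q.darts.map δ).sum) + (r.darts.map δ).sum) := by
  classical
  -- the δ-sum of a path changes by δ of the dart when moving across an edge
  have key : ∀ {u w : V} (h : G.Adj u w) (pu : G.Walk b u) (_ : pu.IsPath)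
      (pw : G.Walk b w) (_ : pw.IsPath),
      (pw.darts.map δ).sum = (pu.darts.map δ).sum + δ ⟨(u, w), h⟩ := by
    intro u w h pu hpu pw hpw
    by_cases hw : w ∈ pu.support
    · -- then pu = (takeUntil w).concat (w,u), and pw = takeUntil w
      set q := pu.takeUntil w hw with hq
      have hqpath : q.IsPath := hpu.takeUntil hw
      have huw : u ≠ w := h.ne
      have hu_not : u ∉ q.support := by
        intro hu
        have hspec := pu.take_spec hw
        have hnodup := hpu.support_nodup
        have hu_drop : u ∈ (pu.dropUntil w hw).support := by
          have := (pu.dropUntil w hw).end_mem_support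
          exact this
        have hu_tail : u ∈ (pu.dropUntil w hw).support.tail := by
          have hc := (pu.dropUntil w hw).support_eq_cons
          rw [hc] at hu_drop
          rcases List.mem_cons.1 hu_drop with h1 | h2
          · exact absurd h1 huw
          · rw [hc]; simpa using h2
        have hsupp : pu.support = q.support ++ (pu.dropUntil w hw).support.tail := by
          conv_lhs => rw [← hspec]
          exact SimpleGraph.Walk.support_append _ _
        rw [hsupp] at hnodup
        have := List.disjoint_of_nodup_append hnodup
        exact this hu hu_tail
      -- q.concat (Adj w u) is a path from b to u
      have hconcpath : (q.concat h.symm).IsPath := by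
        rw [← SimpleGraph.Walk.isPath_reverse_iff]
        rw [SimpleGraph.Walk.reverse_concat]
        apply SimpleGraph.Walk.IsPath.cons hqpath.reverse
        simpa using hu_not
      have hpu_eq : pu = q.concat h.symm :=
        (hT.existsUnique_path b u).unique hpu hconcpath
      have hpw_eq : pw = q := (hT.existsUnique_path b w).unique hpw hqpath
      have hdart : (⟨(w, u), h.symm⟩ : G.Dart) = (⟨(u, w), h⟩ : G.Dart).symm := rfl
      rw [hpu_eq, hpw_eq, SimpleGraph.Walk.darts_concat, List.map_concat,
        List.sum_concat, hdart, hanti]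
      abel
    · -- then pw = pu.concat h
      have hconcpath : (pu.concat h).IsPath := by
        rw [← SimpleGraph.Walk.isPath_reverse_iff]
        rw [SimpleGraph.Walk.reverse_concat]
        apply SimpleGraph.Walk.IsPath.cons hpu.reverse
        simpa using hw
      have hpw_eq : pw = pu.concat h :=
        (hT.existsUnique_path b w).unique hpw hconcpath
      rw [hpw_eq, SimpleGraph.Walk.darts_concat, List.map_concat, List.sum_concat]
  -- δ-sum over any walk equals difference of path sums at its endpoints
  have sumW : ∀ {u w : V} (p : G.Walk u w) (pu : G.Walk b u) (_ : pu.IsPath)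
      (pw : G.Walk b w) (_ : pw.IsPath),
      (pw.darts.map δ).sum = (pu.darts.map δ).sum + (p.darts.map δ).sum := by
    intro u w p
    induction p with
    | nil =>
      intro pu hpu pw hpw
      have : pw = pu := (hT.existsUnique_path b _).unique hpw hpu
      simp [this]
    | @cons a c w h p ih =>
      intro pu hpu pw hpw
      obtain ⟨pc, hpc⟩ := (hT.existsUnique_path b c).exists
      have h1 := key h pu hpu pc hpc
      have h2 := ih pc hpc pw hpw
      rw [h2, h1, SimpleGraph.Walk.darts_cons, List.map_cons, List.sum_cons]
      abel
  -- the graph homomorphism given by g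
  let F : Γ → G →g G := fun g => ⟨fun v => g • v, fun h => hadj g h⟩
  -- U g of a δ-sum over a walk is the δ-sum over the mapped walk
  have mapSum : ∀ (g : Γ) {u w : V} (p : G.Walk u w),
      ((p.map (F g)).darts.map δ).sum = U g ((p.darts.map δ).sum) := by
    intro g u w p
    rw [SimpleGraph.Walk.darts_map, List.map_map]
    suffices hl : ∀ l : List G.Dart,
        (l.map (δ ∘ (F g).mapDart)).sum = U g ((l.map δ).sum) from hl _
    intro l
    induction l with
    | nil => simp
    | cons d l ih =>
      simp only [List.map_cons, List.sum_cons, map_add, ih, Function.comp_apply]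
      rw [hU]
      congr 1
  -- main equivariance statement
  have main : ∀ (g : Γ) (x : V) (p : G.Walk b (g • x)) (_ : p.IsPath)
      (q : G.Walk b x) (_ : q.IsPath)
      (r : G.Walk b (g • b)) (_ : r.IsPath),
      (p.darts.map δ).sum = U g ((q.darts.map δ).sum) + (r.darts.map δ).sum := by
    intro g x p hp q hq r hr
    have := sumW (q.map (F g)) r hr p hp
    rw [this, mapSum]
    abel
  refine ⟨?_, main⟩
  intro g h pg hpg ph hph pgh hpgh
  have hcast : ((g * h) • b : V) = g • (h • b) := mul_smul g h b
  have := main g (h • b) (pgh.copy rfl hcast)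
    ((SimpleGraph.Walk.isPath_copy _ _ _).2 hpgh) ph hph pg hpg
  rwa [SimpleGraph.Walk.darts_copy] at this
end

section
/- Let T be a tree with basepoint b and Julg–Valette map f : T → Ω(T). If a group Γ acts properly on T by graph automorphisms (i.e., for every vertex x and every R > 0 the set {g ∈ Γ : d(g·x, x) ≤ R} is finite), then the affine isometric action α_g(v) = g·v + f(g·b) of Γ on Ω(T) is metrically proper: ‖α_g(0)‖ → ∞ as g leaves finite subsets of Γ. -/
/-- Properness of the Julg–Valette affine action.
`G` is a tree on which a group `Γ` acts by graph automorphisms, properly in the sense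
that for every vertex `x` and radius `R` only finitely many `g` satisfy
`d(g·x, x) ≤ R`.  `f : V → H` is the Julg–Valette embedding with basepoint `b`
(characterised by `‖f x − f y‖² = d(x,y)` together with `f b = 0`).  Then the affine
isometric action `α_g(v) = U_g v + f(g·b)` is metrically proper:
for every `C` the set `{g : ‖α_g(0)‖ ≤ C}` (where `α_g(0) = f(g·b)`) is finite. -/
theorem stmt2 {V : Type*} (G : SimpleGraph V) (hT : G.IsTree)
    {H : Type*} [NormedAddCommGroup H] [InnerProductSpace ℝ H]
    {Γ : Type*} [Group Γ] [MulAction Γ V]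
    (hadj : ∀ (g : Γ) {x y : V}, G.Adj x y → G.Adj (g • x) (g • y))
    (hproper : ∀ (x : V) (R : ℝ), {g : Γ | (G.dist (g • x) x : ℝ) ≤ R}.Finite)
    (b : V) (f : V → H)
    (hf : ∀ x y : V, ‖f x - f y‖ ^ 2 = (G.dist x y : ℝ))
    (hfb : f b = 0) :
    ∀ C : ℝ, {g : Γ | ‖f (g • b)‖ ≤ C}.Finite := by
  intro C
  apply (hproper b (C ^ 2)).subset
  intro g hg
  simp only [Set.mem_setOf_eq] at hg ⊢
  have h := hf (g • b) b
  rw [hfb, sub_zero] at h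
  rw [← h]
  exact pow_le_pow_left₀ (norm_nonneg _) hg 2
end

section
/- Let 𝒱 be a real Hilbert space and equip 𝒱 × ℝ₊ with the weakest topology making the projection to 𝒱 weakly continuous and making all functions (w, t) ↦ t² + ‖v − w‖² continuous, as v ranges over 𝒱. Then for every v ∈ 𝒱 and r > 0, the 'closed ball' B̄_r(v) = {(w, t) ∈ 𝒱 × ℝ₊ : t² + ‖v − w‖² ≤ r} is compact in this topology. -/
open scoped NNReal

/-- The topology on `𝒱 × ℝ₊` from Higson–Kasparov–Trout: the weakest (coarsest) topology
making the projection to `𝒱` weakly continuous and making all the functions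
`(w, t) ↦ t² + ‖v − w‖²` (for `v ∈ 𝒱`) continuous. -/
noncomputable def jvTopology (V : Type*) [NormedAddCommGroup V]
    [InnerProductSpace ℝ V] : TopologicalSpace (V × ℝ≥0) :=
  (⨅ u : V, TopologicalSpace.induced
      (fun p : V × ℝ≥0 => (inner ℝ p.1 u : ℝ)) inferInstance) ⊓
  (⨅ v : V, TopologicalSpace.induced
      (fun p : V × ℝ≥0 => ((p.2 : ℝ)) ^ 2 + ‖v - p.1‖ ^ 2) inferInstance)

/-!
Along an ultrafilter containing the ball, the bounded quantities `⟪w, u⟫` and `t² + ‖w‖²`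
converge. The limits of `⟪w, u⟫` form a bounded linear functional, represented by some `w₀`
(weak compactness of bounded sets), and weak lower semicontinuity of the norm shows that the limit
`s` of `t² + ‖w‖²` is at least `‖w₀‖²`, so `t₀ := √(s - ‖w₀‖²)` makes sense. Since
`t² + ‖z - w‖² = (t² + ‖w‖²) + ‖z‖² - 2⟪w, z⟫`, all defining functions of the topology then
converge to their values at `(w₀, t₀)`, which lies in the ball because the ball is closed.
-/

open Topology Filter RealInnerProductSpace

section WeakLimit

variable {α V : Type*} [NormedAddCommGroup V] [InnerProductSpace ℝ V]

theorem Ultrafilter.exists_tendsto_of_eventually_mem {X : Type*} [TopologicalSpace X]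
    (F : Ultrafilter α) {f : α → X} {s : Set X} (hs : IsCompact s) (hf : ∀ᶠ x in F, f x ∈ s) :
    ∃ L ∈ s, Tendsto f F (𝓝 L) :=
  hs.ultrafilter_le_nhds' (F.map f) hf

theorem Ultrafilter.exists_forall_tendsto_inner [CompleteSpace V] (F : Ultrafilter α)
    {f : α → V} {C : ℝ} (hf : ∀ᶠ x in F, ‖f x‖ ≤ C) :
    ∃ w : V, ∀ u, Tendsto (fun x => ⟪f x, u⟫) F (𝓝 ⟪w, u⟫) := by
  have hlim : ∀ u, ∃ L, Tendsto (fun x => ⟪f x, u⟫) F (𝓝 L) := fun u => by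
    obtain ⟨L, -, hL⟩ := F.exists_tendsto_of_eventually_mem
      (isCompact_closedBall (0 : ℝ) (C * ‖u‖)) <| hf.mono fun x hx => by
        rw [mem_closedBall_zero_iff, Real.norm_eq_abs]
        exact (abs_real_inner_le_norm _ _).trans (by gcongr)
    exact ⟨L, hL⟩
  choose g hg using hlim
  let φ : StrongDual ℝ V := .ofMemClosureImageCoeBounded g (Metric.isBounded_closedBall
      (x := 0) (r := C)) <| mem_closure_of_tendsto (tendsto_pi_nhds.2 hg) <|
    hf.mono fun x hx => ⟨innerSL ℝ (f x), by simpa using hx, rfl⟩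
  refine ⟨(InnerProductSpace.toDual ℝ V).symm φ, fun u => ?_⟩
  rw [InnerProductSpace.toDual_symm_apply]
  exact hg u

theorem norm_sq_le_of_tendsto_inner {l : Filter α} [l.NeBot] {f : α → V} {w : V}
    {φ : α → ℝ} {s : ℝ} (hw : Tendsto (fun x => ⟪f x, w⟫) l (𝓝 ⟪w, w⟫))
    (hφ : Tendsto φ l (𝓝 s)) (hle : ∀ᶠ x in l, ‖f x‖ ^ 2 ≤ φ x) : ‖w‖ ^ 2 ≤ s := by
  have key : 2 * ⟪w, w⟫ ≤ s + ‖w‖ ^ 2 :=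
    le_of_tendsto_of_tendsto (hw.const_mul 2) (hφ.add_const _) <| hle.mono fun x hx => by
      nlinarith [real_inner_le_norm (f x) w, sq_nonneg (‖f x‖ - ‖w‖)]
  rw [real_inner_self_eq_norm_sq] at key
  linarith

end WeakLimit

section JvTopology

variable {V : Type*} [NormedAddCommGroup V]

/-- The squared distance from `(z, 0)` to `(w, t)` in `V × ℝ`. -/
def sqDist (z : V) (p : V × ℝ≥0) : ℝ := (p.2 : ℝ) ^ 2 + ‖z - p.1‖ ^ 2

theorem norm_sq_le_sqDist_zero (p : V × ℝ≥0) : ‖p.1‖ ^ 2 ≤ sqDist 0 p := by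
  simp only [sqDist, zero_sub, norm_neg]
  nlinarith

theorem sqDist_zero_le (v : V) (p : V × ℝ≥0) : sqDist 0 p ≤ 2 * sqDist v p + 2 * ‖v‖ ^ 2 := by
  have hp : ‖p.1‖ ^ 2 ≤ (‖v‖ + ‖v - p.1‖) ^ 2 := by
    gcongr
    simpa only [sub_sub_cancel] using norm_sub_le v (v - p.1)
  simp only [sqDist, zero_sub, norm_neg]
  nlinarith [sq_nonneg (‖v‖ - ‖v - p.1‖)]

variable [InnerProductSpace ℝ V]

theorem sqDist_eq_sqDist_zero (z : V) (p : V × ℝ≥0) :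
    sqDist z p = sqDist 0 p + ‖z‖ ^ 2 - 2 * ⟪p.1, z⟫ := by
  simp only [sqDist, zero_sub, norm_neg, norm_sub_sq_real, real_inner_comm z]
  ring

theorem continuous_sqDist (z : V) : Continuous[jvTopology V, _] (sqDist z) :=
  continuous_iff_le_induced.2 <| inf_le_right.trans <| iInf_le (fun _ => _) z

theorem nhds_jvTopology (p : V × ℝ≥0) :
    @nhds _ (jvTopology V) p = (⨅ u, comap (fun q : V × ℝ≥0 => ⟪q.1, u⟫) (𝓝 ⟪p.1, u⟫)) ⊓
      ⨅ z, comap (sqDist z) (𝓝 (sqDist z p)) := by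
  refine (_root_.nhds_inf
    (t₁ := ⨅ u : V, .induced (fun q : V × ℝ≥0 => ⟪q.1, u⟫) inferInstance)
    (t₂ := ⨅ z : V, .induced (sqDist z) inferInstance)).trans ?_
  simp only [_root_.nhds_iInf, nhds_induced]

theorem le_nhds_jvTopology_of_tendsto {F : Filter (V × ℝ≥0)} {p : V × ℝ≥0}
    (hinner : ∀ u, Tendsto (fun q : V × ℝ≥0 => ⟪q.1, u⟫) F (𝓝 ⟪p.1, u⟫))
    (hsqDist : Tendsto (sqDist 0) F (𝓝 (sqDist 0 p))) :
    F ≤ @nhds _ (jvTopology V) p := by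
  rw [nhds_jvTopology]
  refine le_inf (le_iInf fun u => (hinner u).le_comap) (le_iInf fun z => ?_)
  have := ((hsqDist.add_const (‖z‖ ^ 2)).sub ((hinner z).const_mul 2)).le_comap
  simpa only [← sqDist_eq_sqDist_zero] using this

theorem Ultrafilter.exists_le_nhds_jvTopology [CompleteSpace V] (F : Ultrafilter (V × ℝ≥0))
    {v : V} {r : ℝ} (hF : ∀ᶠ q in F, sqDist v q ≤ r) :
    ∃ p, sqDist v p ≤ r ∧ ↑F ≤ @nhds _ (jvTopology V) p := by
  let R := 2 * r + 2 * ‖v‖ ^ 2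
  have hR : ∀ᶠ q in F, sqDist (0 : V) q ∈ Set.Icc 0 R := hF.mono fun q hq =>
    ⟨(sq_nonneg _).trans (norm_sq_le_sqDist_zero q), (sqDist_zero_le v q).trans (by linarith)⟩
  obtain ⟨w, hw⟩ := F.exists_forall_tendsto_inner (f := Prod.fst) (C := √R) <| hR.mono
    fun q hq => Real.le_sqrt_of_sq_le ((norm_sq_le_sqDist_zero q).trans hq.2)
  obtain ⟨s, -, hs⟩ := F.exists_tendsto_of_eventually_mem isCompact_Icc hR
  have hws : ‖w‖ ^ 2 ≤ s := norm_sq_le_of_tendsto_inner (hw w) hs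
    (.of_forall norm_sq_le_sqDist_zero)
  obtain ⟨t, hst⟩ : ∃ t : ℝ≥0, sqDist 0 (w, t) = s := ⟨(√(s - ‖w‖ ^ 2)).toNNReal, by
    rw [sqDist, zero_sub, norm_neg, Real.coe_toNNReal _ (Real.sqrt_nonneg _),
      Real.sq_sqrt (sub_nonneg.2 hws), sub_add_cancel]⟩
  have hconv : ↑F ≤ @nhds _ (jvTopology V) (w, t) := le_nhds_jvTopology_of_tendsto hw (hst ▸ hs)
  have hmem : sqDist v (w, t) ≤ r := le_of_tendsto
    ((@Continuous.tendsto _ _ (jvTopology V) _ _ (continuous_sqDist v) _).mono_left hconv) hF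
  exact ⟨(w, t), hmem, hconv⟩

end JvTopology

theorem stmt10_general {V : Type*} [NormedAddCommGroup V] [InnerProductSpace ℝ V]
    [CompleteSpace V] (v : V) (r : ℝ) :
    @IsCompact (V × ℝ≥0) (jvTopology V)
      {p : V × ℝ≥0 | ((p.2 : ℝ)) ^ 2 + ‖v - p.1‖ ^ 2 ≤ r} := by
  let := jvTopology V
  exact isCompact_iff_ultrafilter_le_nhds'.2 fun F hF => F.exists_le_nhds_jvTopology hF

/-- Compactness of closed balls.
For a real Hilbert space `𝒱`, with the topology above on `𝒱 × ℝ₊`, every closed ball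
`B̄_r(v) = {(w, t) : t² + ‖v − w‖² ≤ r}` is compact. -/
theorem stmt10 {V : Type*} [NormedAddCommGroup V] [InnerProductSpace ℝ V]
    [CompleteSpace V] (v : V) (r : ℝ) (hr : 0 < r) :
    @IsCompact (V × ℝ≥0) (jvTopology V)
      {p : V × ℝ≥0 | ((p.2 : ℝ)) ^ 2 + ‖v - p.1‖ ^ 2 ≤ r} :=
  stmt10_general v r
end

section
/- Let Γ be a finitely generated group with symmetric generating set S, and suppose there is a sequence of unitary representations (πₙ) of Γ (e.g., on ℓ²(Γ/Γₙ)) such that for every c > 0 some πₙ has a unit vector ξ with ‖πₙ(s)ξ − ξ‖² small enough that ⟨πₙ(Δ_Γ)ξ, ξ⟩ < c while ξ is orthogonal to the invariant vectors. Then the spectrum of the image of Δ_Γ in the C*-algebra completion of ℂ[Γ] with respect to the supremum of the norms over all representations πₙ is not contained in {0} ∪ [c, 2] for any c > 0. Consequently, if Γ fails property (T), witnessed by almost-invariant unit vectors orthogonal to invariant vectors in the representations ℓ²(Γ/Γₙ), then the space of graphs X = ⊔ Γ/Γₙ does not have geometric property (T). -/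
/-!
If `spec Δ ⊆ {0} ∪ [c, 2]`, the same gap holds for every `πₙ(Δ_Γ)`. For a self-adjoint `a`
whose spectrum avoids `(0, c)`, the continuous functional calculus gives `p` with `a p = a` and
`c p ≤ a`; a vector `ξ` orthogonal to `ker a` then satisfies `⟪p ξ, ξ⟫ = ‖ξ‖²` (as `ξ - p ξ ∈ ker a`),
hence `c ‖ξ‖² ≤ ⟪a ξ, ξ⟫`. This contradicts the existence of unit vectors `ξ ⊥ ker πₙ(Δ_Γ)`
with `⟪πₙ(Δ_Γ) ξ, ξ⟫ < c`.
-/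

open ContinuousLinearMap

theorem exists_mul_eq_self_and_smul_le_of_spectrum_gap {A : Type*} [Ring A] [StarRing A]
    [TopologicalSpace A] [Algebra ℝ A] [ContinuousFunctionalCalculus ℝ A IsSelfAdjoint]
    [PartialOrder A] [StarOrderedRing A] {a : A} (ha : IsSelfAdjoint a) {c : ℝ} (hc : 0 < c)
    (hgap : ∀ x ∈ spectrum ℝ a, x = 0 ∨ c ≤ x) :
    ∃ p : A, a * p = a ∧ c • p ≤ a := by
  set f : ℝ → ℝ := fun x => min (x / c) 1
  have hf : ∀ x ∈ spectrum ℝ a, x * f x = x ∧ c * f x ≤ x := by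
    intro x hx
    rcases hgap x hx with rfl | hcx
    · simp [f]
    · have hfx : f x = 1 := min_eq_right ((one_le_div hc).mpr hcx)
      simp [hfx, hcx]
  refine ⟨cfc f a, ?_, ?_⟩
  · calc a * cfc f a = cfc (fun x : ℝ => x) a * cfc f a := by rw [cfc_id' ℝ a]
      _ = cfc (fun x : ℝ => x * f x) a := (cfc_mul _ _ a).symm
      _ = cfc (fun x : ℝ => x) a := cfc_congr fun x hx => (hf x hx).1
      _ = a := cfc_id' ℝ a
  · have hdiff : a - c • cfc f a = cfc (fun x => x - c * f x) a := by
      rw [cfc_sub _ _ a, cfc_const_mul c f a, cfc_id' ℝ a]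
    rw [← sub_nonneg, hdiff]
    exact cfc_nonneg fun x hx => sub_nonneg.mpr (hf x hx).2

theorem mul_norm_sq_le_re_inner_of_spectrum_gap {E : Type*} [NormedAddCommGroup E]
    [InnerProductSpace ℂ E] [CompleteSpace E] {a : E →L[ℂ] E} (ha : IsSelfAdjoint a) {c : ℝ}
    (hc : 0 < c) (hgap : ∀ x ∈ spectrum ℝ a, x = 0 ∨ c ≤ x) {ξ : E}
    (hξ : ∀ η : E, a η = 0 → inner ℂ η ξ = 0) :
    c * ‖ξ‖ ^ 2 ≤ (inner ℂ (a ξ) ξ).re := by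
  obtain ⟨p, hap, hpa⟩ := exists_mul_eq_self_and_smul_le_of_spectrum_gap ha hc hgap
  have hker : a (ξ - p ξ) = 0 := by
    rw [map_sub, ← mul_apply_eq_comp, hap, sub_self]
  have hp : inner ℂ (p ξ) ξ = (‖ξ‖ ^ 2 : ℂ) := by
    have h := hξ _ hker
    rw [inner_sub_left, inner_self_eq_norm_sq_to_K, sub_eq_zero] at h
    exact h.symm
  have hpos := ((le_def _ _).mp hpa).re_inner_nonneg_left ξ
  have hexpand : (inner ℂ ((a - c • p) ξ) ξ).re = (inner ℂ (a ξ) ξ).re - c * ‖ξ‖ ^ 2 := by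
    rw [sub_apply, inner_sub_left, smul_apply, RCLike.real_smul_eq_coe_smul (K := ℂ),
      inner_smul_left, hp]
    simp [← Complex.ofReal_pow]
  rw [RCLike.re_to_complex, hexpand] at hpos
  linarith

theorem stmt17_general {A : Type*} [CStarAlgebra A] (Δ : A)
    {H : ℕ → Type*} [∀ n, NormedAddCommGroup (H n)]
    [∀ n, InnerProductSpace ℂ (H n)] [∀ n, CompleteSpace (H n)]
    (T : ∀ n, H n →L[ℂ] H n)
    (hsa : ∀ n, IsSelfAdjoint (T n))
    (hspec : ∀ n, spectrum ℂ (T n) ⊆ spectrum ℂ Δ)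
    (halm : ∀ c > (0 : ℝ), ∃ (n : ℕ) (ξ : H n), ‖ξ‖ = 1 ∧
      (∀ η : H n, T n η = 0 → (inner ℂ η ξ : ℂ) = 0) ∧
      (inner ℂ (T n ξ) ξ : ℂ).re < c) :
    ∀ c > (0 : ℝ), ¬ (spectrum ℂ Δ ⊆
      insert (0 : ℂ) {z : ℂ | z.im = 0 ∧ c ≤ z.re ∧ z.re ≤ 2}) := by
  intro c hc hsub
  obtain ⟨n, ξ, hξ, horth, hlt⟩ := halm c hc
  have hgap : ∀ x ∈ spectrum ℝ (T n), x = 0 ∨ c ≤ x := by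
    intro x hx
    rcases hsub (hspec n (spectrum.algebraMap_mem ℂ hx)) with h0 | ⟨-, hcx, -⟩
    · exact Or.inl (by simpa using h0)
    · exact Or.inr (by simpa using hcx)
  have hle := mul_norm_sq_le_re_inner_of_spectrum_gap (hsa n) hc hgap horth
  rw [hξ, one_pow, mul_one] at hle
  linarith

/-- Failure of property (T) obstructs geometric property (T).
`Δ` is the Laplacian in the maximal completion (a C*-algebra `A`), `T n = πₙ(Δ_Γ)` are
its images in a family of unitary representations; since the maximal norm dominates each
representation norm, `spec(T n) ⊆ spec(Δ)`.  Each `T n` is a positive self-adjoint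
operator.  If for every `c > 0` some representation admits a unit vector `ξ`, orthogonal
to the invariant vectors (the kernel of `T n`), with `⟨T n ξ, ξ⟩ < c`, then for no
`c > 0` is `spec(Δ)` contained in `{0} ∪ [c, 2]`: geometric property (T) fails. -/
theorem stmt17 {A : Type*} [CStarAlgebra A] (Δ : A)
    {H : ℕ → Type*} [∀ n, NormedAddCommGroup (H n)]
    [∀ n, InnerProductSpace ℂ (H n)] [∀ n, CompleteSpace (H n)]
    (T : ∀ n, H n →L[ℂ] H n)
    (hsa : ∀ n, IsSelfAdjoint (T n))
    (hpos : ∀ (n : ℕ) (ξ : H n), 0 ≤ (inner ℂ (T n ξ) ξ : ℂ).re)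
    (hspec : ∀ n, spectrum ℂ (T n) ⊆ spectrum ℂ Δ)
    (halm : ∀ c > (0 : ℝ), ∃ (n : ℕ) (ξ : H n), ‖ξ‖ = 1 ∧
      (∀ η : H n, T n η = 0 → (inner ℂ η ξ : ℂ) = 0) ∧
      (inner ℂ (T n ξ) ξ : ℂ).re < c) :
    ∀ c > (0 : ℝ), ¬ (spectrum ℂ Δ ⊆
      insert (0 : ℂ) {z : ℂ | z.im = 0 ∧ c ≤ z.re ∧ z.re ≤ 2}) :=
  stmt17_general Δ T hsa hspec halm
end
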